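/- Let G be a starlike graph with clique partition (V_0, V_1, …, V_t) and let S be an m-convexly independent set of G. Suppose there is an edge u·v_i of G with u ∈ S ∩ C'_0 and v_i ∈ S ∩ C_i for some i ∈ {0, 1, …, t}. Then for every vertex v ∈ S ∩ Z, N(v) ∩ C'_0 ⊆ C'_i. -/

import Mathlib

open SimpleGraph

variable {V : Type*}

/-- The closed neighborhood of a vertex. -/
def closedNbhd (G : SimpleGraph V) (v : V) : Set V := insert v (G.neighborSet v)

/-- A vertex is simplicial if its closed neighborhood induces a complete graph. -/
def IsSimplicial (G : SimpleGraph V) (v : V) : Prop :=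
  ∀ a ∈ closedNbhd G v, ∀ b ∈ closedNbhd G v, a ≠ b → G.Adj a b

/-- `Z`, the set of simplicial vertices of `G`. -/
def simplicialSet (G : SimpleGraph V) : Set V := {v | IsSimplicial G v}

/-- `N(T)`, the union of open neighborhoods of vertices of `T`. -/
def nbhdSet (G : SimpleGraph V) (T : Set V) : Set V := ⋃ v ∈ T, G.neighborSet v

/-- An independent set of vertices. -/
def IsIndepSet' (G : SimpleGraph V) (T : Set V) : Prop :=
  ∀ u ∈ T, ∀ v ∈ T, ¬ G.Adj u v

/-- The difference `d(T) = |T| - |N(T)|` of a set of vertices. -/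
noncomputable def indepDiff (G : SimpleGraph V) (T : Set V) : ℤ :=
  (T.ncard : ℤ) - ((nbhdSet G T).ncard : ℤ)

/-- The critical independence difference `d_c(G)`. -/
noncomputable def critIndepDiff (G : SimpleGraph V) : ℤ :=
  sSup {d : ℤ | ∃ T : Set V, IsIndepSet' G T ∧ d = indepDiff G T}

/-- A walk is an induced path if it is a path and no two non-consecutive vertices
of it are adjacent. -/
def IsInducedPath (G : SimpleGraph V) {a b : V} (p : G.Walk a b) : Prop :=
  p.IsPath ∧ ∀ (i j : ℕ) (hi : i < p.support.length) (hj : j < p.support.length),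
    i + 1 < j → ¬ G.Adj (p.support.get ⟨i, hi⟩) (p.support.get ⟨j, hj⟩)

/-- A set is monophonically convex if it contains every vertex of every induced path
joining two of its vertices. -/
def MonoConvex (G : SimpleGraph V) (S : Set V) : Prop :=
  ∀ ⦃a b : V⦄, a ∈ S → b ∈ S → ∀ p : G.Walk a b, IsInducedPath G p →
    ∀ w ∈ p.support, w ∈ S

/-- The monophonic convex hull of `S`: the smallest monophonically convex set containing `S`. -/
def monoHull (G : SimpleGraph V) (S : Set V) : Set V :=
  ⋂₀ {T : Set V | S ⊆ T ∧ MonoConvex G T}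

/-- A set is monophonically convexly independent if no member is in the hull
of the others. -/
def MConvexIndep (G : SimpleGraph V) (S : Set V) : Prop :=
  ∀ v ∈ S, v ∉ monoHull G (S \ {v})

/-- The monophonic rank: the largest size of an m-convexly independent set. -/
noncomputable def monoRank (G : SimpleGraph V) : ℕ :=
  sSup {n : ℕ | ∃ S : Set V, MConvexIndep G S ∧ n = S.ncard}

/-- A starlike partition of a graph: a partition of the vertex set into cliques
`V_0, V_1, …, V_t` such that `V_0` is a maximal clique and, for `i ≥ 1`,
all vertices of `V_i` have the same closed neighborhood outside `V_i`,
contained in `V_0`. -/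
structure IsStarlikePartition (G : SimpleGraph V) (t : ℕ) (Vp : Fin (t+1) → Set V) : Prop where
  nonempty : ∀ i, (Vp i).Nonempty
  disjoint : ∀ i j, i ≠ j → Disjoint (Vp i) (Vp j)
  covers : ∀ v : V, ∃ i, v ∈ Vp i
  cliques : ∀ i, G.IsClique (Vp i)
  maximal : ∀ T : Set V, G.IsClique T → Vp 0 ⊆ T → T ⊆ Vp 0
  nbhd_eq : ∀ i : Fin (t+1), i ≠ 0 → ∀ u ∈ Vp i, ∀ v ∈ Vp i,
    closedNbhd G u \ Vp i = closedNbhd G v \ Vp i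
  nbhd_sub : ∀ i : Fin (t+1), i ≠ 0 → ∀ u ∈ Vp i, closedNbhd G u \ Vp i ⊆ Vp 0

/-- `X_i`: the maximal clique containing `V_i` (`X_0 = V_0`; for `i ≥ 1` it is
the closed neighborhood of any vertex of `V_i`). -/
def Xset (G : SimpleGraph V) {t : ℕ} (Vp : Fin (t+1) → Set V) (i : Fin (t+1)) : Set V :=
  if i = 0 then Vp 0 else ⋃ u ∈ Vp i, closedNbhd G u

/-- `C_i = X_i ∩ Z`. -/
def Cset (G : SimpleGraph V) {t : ℕ} (Vp : Fin (t+1) → Set V) (i : Fin (t+1)) : Set V :=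
  Xset G Vp i ∩ simplicialSet G

/-- `C'_i = X_i − C_i`. -/
def Cset' (G : SimpleGraph V) {t : ℕ} (Vp : Fin (t+1) → Set V) (i : Fin (t+1)) : Set V :=
  Xset G Vp i \ Cset G Vp i

/-- `Y_i`: the union of the sets `C_j`, over `j ≠ i` with `C'_j ⊆ C'_i`. -/
def Yset (G : SimpleGraph V) {t : ℕ} (Vp : Fin (t+1) → Set V) (i : Fin (t+1)) : Set V :=
  ⋃ j ∈ {j : Fin (t+1) | j ≠ i ∧ Cset' G Vp j ⊆ Cset' G Vp i}, Cset G Vp j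

open scoped Classical in
/-- The vertex set of the split graph `G_i`: if `|N(Y_i) − Y_i| = |C'_i| − 1` and
`|Y_i| ≥ |C'_i| − 1` then `(C'_i − {x}) ∪ Y_i` where `{x} = C'_i − N(Y_i)`
(so that `C'_i − {x} = C'_i ∩ N(Y_i)`), otherwise `C'_i ∪ Y_i`. -/
noncomputable def Wset (G : SimpleGraph V) {t : ℕ} (Vp : Fin (t+1) → Set V)
    (i : Fin (t+1)) : Set V :=
  if (((nbhdSet G (Yset G Vp i) \ Yset G Vp i).ncard : ℤ) = ((Cset' G Vp i).ncard : ℤ) - 1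
      ∧ ((Yset G Vp i).ncard : ℤ) ≥ ((Cset' G Vp i).ncard : ℤ) - 1)
  then (Cset' G Vp i ∩ nbhdSet G (Yset G Vp i)) ∪ Yset G Vp i
  else Cset' G Vp i ∪ Yset G Vp i

/-- The induced subgraph on `W` with all edges inside `Y` deleted. -/
def inducedMinusY (G : SimpleGraph V) (W Y : Set V) : SimpleGraph ↥W where
  Adj a b := G.Adj a b ∧ ¬((a : V) ∈ Y ∧ (b : V) ∈ Y)
  symm := by
    constructor
    intro a b h
    exact ⟨h.1.symm, fun hc => h.2 ⟨hc.2, hc.1⟩⟩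
  loopless := by
    constructor
    intro a h
    exact G.irrefl h.1

/-- The split graph `G_i = G[W_i] − E(G[Y_i])`. -/
noncomputable def Gsplit (G : SimpleGraph V) {t : ℕ} (Vp : Fin (t+1) → Set V)
    (i : Fin (t+1)) : SimpleGraph ↥(Wset G Vp i) :=
  inducedMinusY G (Wset G Vp i) (Yset G Vp i)

/-!
A neighbour `w ∈ C'_0` of `v` lies in the clique `V_0` together with `u`. If `w` were not in
`N[v_i]`, then `v_i, u, v` or `v_i, u, w, v` would be an induced path between two other
members of `S` passing through `u`, contradicting m-convex independence. Hence
`w ∈ N[v_i] ⊆ X_i` (as `v_i` is simplicial), and `w` is not simplicial, so `w ∈ C'_i`.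
-/

section Graph

variable {G : SimpleGraph V}

lemma self_mem_closedNbhd (v : V) : v ∈ closedNbhd G v := Set.mem_insert _ _

lemma mem_closedNbhd_of_adj {v w : V} (h : G.Adj v w) : w ∈ closedNbhd G v :=
  Set.mem_insert_of_mem _ h

lemma mem_closedNbhd_comm {v w : V} : w ∈ closedNbhd G v ↔ v ∈ closedNbhd G w := by
  simp only [closedNbhd, Set.mem_insert_iff, mem_neighborSet, eq_comm (a := w), G.adj_comm]

lemma IsSimplicial.isClique {v : V} (h : IsSimplicial G v) : G.IsClique (closedNbhd G v) :=
  fun a ha b hb hab => h a ha b hb hab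

lemma IsSimplicial.closedNbhd_subset {v x : V} (h : IsSimplicial G v)
    (hx : x ∈ closedNbhd G v) : closedNbhd G v ⊆ closedNbhd G x := by
  intro y hy
  rcases eq_or_ne x y with rfl | hxy
  · exact self_mem_closedNbhd x
  · exact mem_closedNbhd_of_adj (h x hx y hy hxy)

lemma IsSimplicial.adj_of_adj_of_adj {v a b : V} (h : IsSimplicial G v)
    (hav : G.Adj a v) (hbv : G.Adj b v) (hab : a ≠ b) : G.Adj a b :=
  h a (mem_closedNbhd_of_adj hav.symm) b (mem_closedNbhd_of_adj hbv.symm) hab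

lemma isInducedPath_cons_cons_nil {a b c : V} (hab : G.Adj a b) (hbc : G.Adj b c)
    (hac : ¬ G.Adj a c) (hac' : a ≠ c) :
    IsInducedPath G (Walk.cons hab (Walk.cons hbc Walk.nil)) := by
  constructor
  · simp [Walk.isPath_def, hab.ne, hbc.ne, hac']
  · intro i j hi hj hij
    simp only [Walk.support_cons, Walk.support_nil, List.length_cons, List.length_nil] at hi hj ⊢
    interval_cases j <;> interval_cases i <;> simp_all

lemma isInducedPath_cons_cons_cons_nil {a b c d : V} (hab : G.Adj a b) (hbc : G.Adj b c)
    (hcd : G.Adj c d) (hac : ¬ G.Adj a c) (had : ¬ G.Adj a d) (hbd : ¬ G.Adj b d)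
    (hac' : a ≠ c) (had' : a ≠ d) (hbd' : b ≠ d) :
    IsInducedPath G (Walk.cons hab (Walk.cons hbc (Walk.cons hcd Walk.nil))) := by
  constructor
  · simp [Walk.isPath_def, hab.ne, hbc.ne, hcd.ne, hac', had', hbd']
  · intro i j hi hj hij
    simp only [Walk.support_cons, Walk.support_nil, List.length_cons, List.length_nil] at hi hj ⊢
    interval_cases j <;> interval_cases i <;> simp_all

lemma mem_monoHull_of_mem_support {S : Set V} {a b x : V} (ha : a ∈ S) (hb : b ∈ S)
    (p : G.Walk a b) (hp : IsInducedPath G p) (hx : x ∈ p.support) : x ∈ monoHull G S :=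
  fun _ hT => hT.2 (hT.1 ha) (hT.1 hb) p hp x hx

lemma MConvexIndep.notMem_support {S : Set V} (hS : MConvexIndep G S) {a b x : V}
    (ha : a ∈ S) (hb : b ∈ S) (hx : x ∈ S) (hax : a ≠ x) (hbx : b ≠ x)
    (p : G.Walk a b) (hp : IsInducedPath G p) : x ∉ p.support :=
  fun hmem => hS x hx (mem_monoHull_of_mem_support ⟨ha, hax⟩ ⟨hb, hbx⟩ p hp hmem)

lemma MConvexIndep.mem_closedNbhd {S : Set V} (hS : MConvexIndep G S) {u a v w : V}
    (huS : u ∈ S) (haS : a ∈ S) (hvS : v ∈ S) (hv : IsSimplicial G v) (huv : u ≠ v)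
    (hua : G.Adj u a) (hwu : w ∈ closedNbhd G u) (hwv : G.Adj w v) :
    w ∈ closedNbhd G a := by
  by_contra hwa
  have hwa' : ¬ G.Adj a w := fun h => hwa (mem_closedNbhd_of_adj h)
  have haw : a ≠ w := fun h => hwa (h ▸ self_mem_closedNbhd a)
  have hav : a ≠ v := by
    rintro rfl
    exact hwa' hwv.symm
  have hav' : ¬ G.Adj a v := fun h => hwa' (hv.adj_of_adj_of_adj h hwv haw)
  have huw : G.Adj u w := by
    rcases hwu with rfl | h
    · exact absurd (mem_closedNbhd_of_adj hua.symm) hwa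
    · exact h
  have huv' : ¬ G.Adj u v := fun h =>
    hS.notMem_support haS hvS huS hua.ne.symm huv.symm _
      (isInducedPath_cons_cons_nil hua.symm h hav' hav) (by simp)
  exact hS.notMem_support haS hvS huS hua.ne.symm huv.symm _
    (isInducedPath_cons_cons_cons_nil hua.symm huw hwv hwa' hav' huv' haw hav huv) (by simp)

end Graph

section Starlike

variable {G : SimpleGraph V} {t : ℕ} {Vp : Fin (t+1) → Set V}

lemma Xset_zero : Xset G Vp 0 = Vp 0 := if_pos rfl

lemma mem_Cset'_iff {i : Fin (t+1)} {w : V} :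
    w ∈ Cset' G Vp i ↔ w ∈ Xset G Vp i ∧ w ∉ simplicialSet G := by
  simp only [Cset', Cset, Set.mem_sdiff, Set.mem_inter_iff, not_and, and_congr_right_iff]
  exact fun hw => ⟨fun h => h hw, fun h _ => h⟩

lemma closedNbhd_subset_Xset (hstar : IsStarlikePartition G t Vp) {i : Fin (t+1)} {v : V}
    (hv : v ∈ Cset G Vp i) : closedNbhd G v ⊆ Xset G Vp i := by
  obtain ⟨hvX, hvZ⟩ := hv
  by_cases hi : i = 0
  · subst hi
    rw [Xset_zero] at hvX ⊢
    refine hstar.maximal _ (IsSimplicial.isClique hvZ) fun x hx => ?_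
    rcases eq_or_ne x v with rfl | hxv
    · exact self_mem_closedNbhd x
    · exact mem_closedNbhd_of_adj (hstar.cliques 0 hvX hx hxv.symm)
  · rw [Xset, if_neg hi] at hvX ⊢
    obtain ⟨x, hx, hvx⟩ := Set.mem_iUnion₂.1 hvX
    exact Set.subset_iUnion₂_of_subset x hx
      (IsSimplicial.closedNbhd_subset hvZ (mem_closedNbhd_comm.1 hvx))

end Starlike

theorem statement11_general (G : SimpleGraph V) (t : ℕ) (Vp : Fin (t+1) → Set V)
    (hstar : IsStarlikePartition G t Vp) (S : Set V) (hS : MConvexIndep G S)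
    (i : Fin (t+1)) (u vi : V)
    (hu : u ∈ S ∩ Cset' G Vp 0) (hvi : vi ∈ S ∩ Cset G Vp i) (huvi : G.Adj u vi)
    (v : V) (hv : v ∈ S ∩ simplicialSet G) :
    G.neighborSet v ∩ Cset' G Vp 0 ⊆ Cset' G Vp i := by
  rintro w ⟨hwv, hw⟩
  obtain ⟨huS, huC⟩ := hu
  rw [mem_Cset'_iff, Xset_zero] at huC hw
  obtain ⟨huV0, huZ⟩ := huC
  have huv : u ≠ v := fun h => huZ (h ▸ hv.2)
  have hwu : w ∈ closedNbhd G u := by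
    rcases eq_or_ne u w with rfl | huw
    · exact self_mem_closedNbhd u
    · exact mem_closedNbhd_of_adj (hstar.cliques 0 huV0 hw.1 huw)
  have hwvi := hS.mem_closedNbhd huS hvi.1 hv.1 hv.2 huv huvi hwu hwv.symm
  exact mem_Cset'_iff.2 ⟨closedNbhd_subset_Xset hstar hvi.2 hwvi, hw.2⟩

/-- if `S` is m-convexly independent in a starlike graph and there is an
edge `u·v_i` with `u ∈ S ∩ C'_0` and `v_i ∈ S ∩ C_i`, then every `v ∈ S ∩ Z` satisfies
`N(v) ∩ C'_0 ⊆ C'_i`. -/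
theorem statement11 [Fintype V] (G : SimpleGraph V) (t : ℕ) (Vp : Fin (t+1) → Set V)
    (hstar : IsStarlikePartition G t Vp) (S : Set V) (hS : MConvexIndep G S)
    (i : Fin (t+1)) (u vi : V)
    (hu : u ∈ S ∩ Cset' G Vp 0) (hvi : vi ∈ S ∩ Cset G Vp i) (huvi : G.Adj u vi)
    (v : V) (hv : v ∈ S ∩ simplicialSet G) :
    G.neighborSet v ∩ Cset' G Vp 0 ⊆ Cset' G Vp i :=
  statement11_general G t Vp hstar S hS i u vi hu hvi huvi v hv
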